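/- arXiv:1005.1402 — 5 statements merged into one kernel-verified Lean document; each statement's English description precedes it below -/
import Mathlib

section
/- Let y : Fin 4 → ℝ have all components positive, set G(y) = y₁y₂y₃y₄, gᵢⱼ(y) = (1 − 2δᵢⱼ)·√(G(y))/(8·yᵢ·yⱼ), and g^{jk}(y) = 2·(1 − 2δ_{jk})·yⱼ·y_k/√(G(y)). Then the 4×4 matrix (g^{jk}) is the inverse of the 4×4 matrix (gᵢⱼ): for all i, k ∈ {1,2,3,4}, ∑_{m=1}^{4} gᵢₘ(y)·g^{mk}(y) = δᵢᵏ. -/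
open scoped BigOperators

/-- Kronecker delta on `Fin 4`, valued in `ℝ`. -/
noncomputable def kd (i j : Fin 4) : ℝ := if i = j then 1 else 0

/-- The product `G(y) = y₁·y₂·y₃·y₄`. -/
noncomputable def Gfun (y : Fin 4 → ℝ) : ℝ := y 0 * y 1 * y 2 * y 3

/-- Partial derivative of `f` with respect to the `i`-th coordinate at `y`. -/
noncomputable def pd (f : (Fin 4 → ℝ) → ℝ) (i : Fin 4) (y : Fin 4 → ℝ) : ℝ :=
  fderiv ℝ f y (Pi.single i 1)

/-- Fundamental metrical tensor of the Berwald-Moór metric. -/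
noncomputable def gBM (y : Fin 4 → ℝ) (i j : Fin 4) : ℝ :=
  (1 - 2 * kd i j) * Real.sqrt (Gfun y) / (8 * y i * y j)

/-- Inverse of the fundamental metrical tensor of the Berwald-Moór metric. -/
noncomputable def gBMinv (y : Fin 4 → ℝ) (j k : Fin 4) : ℝ :=
  2 * (1 - 2 * kd j k) * y j * y k / Real.sqrt (Gfun y)

/-- The constants `A^i_{jk}`. -/
noncomputable def Acoef (i j k : Fin 4) : ℝ :=
  (2 * kd i j + 2 * kd i k + 2 * kd j k - 8 * kd i j * kd j k - 1) / 8

/-- Vertical Cartan coefficients `C^i_{jk}(y) = A^i_{jk}·yᵢ/(yⱼ·y_k)`. -/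
noncomputable def CBM (y : Fin 4 → ℝ) (i j k : Fin 4) : ℝ :=
  Acoef i j k * y i / (y j * y k)

/-- The sign matrix `J - 2I` squares to `(n - 4) J + 4 I`, a multiple of the identity exactly in
dimension four: this is why the Berwald–Moór metric has such a simple inverse. -/
lemma sum_one_sub_two_ite_mul_one_sub_two_ite {ι : Type*} [Fintype ι] [DecidableEq ι] (i k : ι) :
    ∑ m, (1 - 2 * (if i = m then 1 else 0 : ℝ)) * (1 - 2 * if m = k then 1 else 0)
      = Fintype.card ι - 4 + 4 * if i = k then 1 else 0 := by
  have expand : ∀ m, (1 - 2 * (if i = m then 1 else 0 : ℝ)) * (1 - 2 * if m = k then 1 else 0)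
      = 1 - 2 * (if i = m then 1 else 0) - 2 * (if m = k then 1 else 0)
        + 4 * (if i = k then 1 else 0) * if m = k then 1 else 0 := by
    intro m
    split_ifs <;> grind
  simp only [expand, Finset.sum_add_distrib, Finset.sum_sub_distrib, ← Finset.mul_sum,
    Finset.sum_ite_eq, Finset.sum_ite_eq', Finset.sum_const, Finset.card_univ, Finset.mem_univ,
    if_true, nsmul_eq_mul, mul_one]
  ring

lemma sum_one_sub_two_kd_mul_one_sub_two_kd (i k : Fin 4) :
    ∑ m, (1 - 2 * kd i m) * (1 - 2 * kd m k) = 4 * kd i k := by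
  simp only [kd, sum_one_sub_two_ite_mul_one_sub_two_ite, Fintype.card_fin]
  ring

lemma gBM_mul_gBMinv (y : Fin 4 → ℝ) (hG : 0 < Gfun y) {i m : Fin 4} (hi : y i ≠ 0)
    (hm : y m ≠ 0) (k : Fin 4) :
    gBM y i m * gBMinv y m k = (1 - 2 * kd i m) * (1 - 2 * kd m k) * (y k / (4 * y i)) := by
  have hsqrt : Real.sqrt (Gfun y) ≠ 0 := (Real.sqrt_pos.mpr hG).ne'
  unfold gBM gBMinv
  field_simp
  ring

lemma Gfun_pos {y : Fin 4 → ℝ} (hy : ∀ i, 0 < y i) : 0 < Gfun y := by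
  have := hy 0; have := hy 1; have := hy 2; have := hy 3
  unfold Gfun
  positivity

/-- the matrix (g^{jk}) is inverse to (g_{ij}). -/
theorem berwald_moor_metric_inverse
    (y : Fin 4 → ℝ) (hy : ∀ i, 0 < y i) (i k : Fin 4) :
    ∑ m, gBM y i m * gBMinv y m k = kd i k := by
  have hi : y i ≠ 0 := (hy i).ne'
  calc ∑ m, gBM y i m * gBMinv y m k
      = (∑ m, (1 - 2 * kd i m) * (1 - 2 * kd m k)) * (y k / (4 * y i)) := by
        rw [Finset.sum_mul]
        exact Finset.sum_congr rfl fun m _ => gBM_mul_gBMinv y (Gfun_pos hy) hi (hy m).ne' k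
    _ = 4 * kd i k * (y k / (4 * y i)) := by rw [sum_one_sub_two_kd_mul_one_sub_two_kd]
    _ = kd i k := by
        by_cases hik : i = k
        · subst hik
          field_simp [kd]
        · simp [kd, hik]
end

section
/- Let y : Fin 4 → ℝ have all components positive, gᵢⱼ(y) = (1 − 2δᵢⱼ)·√(y₁y₂y₃y₄)/(8·yᵢ·yⱼ), g^{jk}(y) = 2·(1 − 2δ_{jk})·yⱼ·y_k/√(y₁y₂y₃y₄), and define for each i, j, k the vertical Cartan coefficient C^{i}_{jk}(y) := (1/2)·∑_{m=1}^{4} g^{im}(y)·(∂g_{jm}/∂y_k(y) + ∂g_{km}/∂y_j(y) − ∂g_{jk}/∂y_m(y)). Then C^{i}_{jk}(y) = A^{i}_{jk}·yᵢ/(yⱼ·y_k), where A^{i}_{jk} := (2δ^{i}_{j} + 2δ^{i}_{k} + 2δ_{jk} − 8δ^{i}_{j}δ_{jk} − 1)/8 (no summation over i, j, k). -/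
/-!
Up to a constant factor, `g_ab = √(y₁y₂y₃y₄) / (y_a y_b)`, so its logarithmic derivative is
`∂_c log g_ab = (1/2 - δ_ac - δ_bc) / y_c`, while in `g^{im} g_ab` the square root cancels.
Hence every term of the sum defining `C^i_{jk}` is `y_i / (y_j y_k)` times a rational constant
built from Kronecker symbols, and the theorem reduces to a finite identity among those.
-/

open scoped BigOperators

lemma kd_div_apply_eq (y : Fin 4 → ℝ) (a c : Fin 4) : kd a c / y a = kd a c / y c := by
  unfold kd; split_ifs with h <;> simp [h]

lemma HasFDerivAt.pd_eq {f : (Fin 4 → ℝ) → ℝ} {f' : (Fin 4 → ℝ) →L[ℝ] ℝ} {y : Fin 4 → ℝ}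
    (hf : HasFDerivAt f f' y) (c : Fin 4) : pd f c y = f' (Pi.single c 1) := by
  rw [pd, hf.fderiv]

lemma differentiable_Gfun : Differentiable ℝ Gfun := by
  unfold Gfun; fun_prop

-- `Gfun` is affine in each coordinate.
lemma mul_pd_Gfun (y : Fin 4 → ℝ) (c : Fin 4) : y c * pd Gfun c y = Gfun y := by
  have hproj (m : Fin 4) := hasFDerivAt_apply (𝕜 := ℝ) m y
  have h : HasFDerivAt Gfun _ y := (((hproj 0).mul (hproj 1)).mul (hproj 2)).mul (hproj 3)
  rw [h.pd_eq]
  fin_cases c <;> simp [Gfun] <;> ring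

lemma pd_gBM {y : Fin 4 → ℝ} (hy : ∀ i, 0 < y i) (a b c : Fin 4) :
    pd (fun z => gBM z a b) c y = gBM y a b * (1 / 2 - kd a c - kd b c) / y c := by
  have hproj (m : Fin 4) := hasFDerivAt_apply (𝕜 := ℝ) m y
  have hsqrt := (differentiable_Gfun y).hasFDerivAt.sqrt (Gfun_pos hy).ne'
  have hinv := (hasDerivAt_inv (mul_pos (hy a) (hy b)).ne').comp_hasFDerivAt y
    ((hproj a).mul (hproj b))
  have h := (hsqrt.mul hinv).const_mul ((1 - 2 * kd a b) / 8)
  have hfun : (fun z => gBM z a b) =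
      fun z => (1 - 2 * kd a b) / 8 * (√(Gfun z) * (z a * z b)⁻¹) := by
    funext z; simp only [gBM]; field_simp
  have hGc : fderiv ℝ Gfun y (Pi.single c 1) = √(Gfun y) ^ 2 / y c := by
    rw [Real.sq_sqrt (Gfun_pos hy).le]
    exact eq_div_of_mul_eq (hy c).ne' ((mul_comm _ _).trans (mul_pd_Gfun y c))
  calc pd (fun z => gBM z a b) c y
      = gBM y a b * (1 / (2 * y c) - kd a c / y a - kd b c / y b) := by
        rw [hfun]
        refine (h.pd_eq c).trans ?_
        have := Real.sqrt_ne_zero'.2 (Gfun_pos hy)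
        have := (hy a).ne'; have := (hy b).ne'; have := (hy c).ne'
        simp only [smul_apply, add_apply, ContinuousLinearMap.proj_apply, Pi.single_apply,
          ← kd.eq_1, smul_eq_mul, hGc, Function.comp_apply, Pi.mul_apply, gBM]
        field_simp
        ring
    _ = gBM y a b * (1 / 2 - kd a c - kd b c) / y c := by
        rw [kd_div_apply_eq, kd_div_apply_eq]; ring

lemma gBMinv_mul_gBM {y : Fin 4 → ℝ} (hy : ∀ i, 0 < y i) (i m a b : Fin 4) :
    gBMinv y i m * gBM y a b = (1 - 2 * kd i m) * (1 - 2 * kd a b) * y i * y m / (4 * y a * y b) := by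
  have := Real.sqrt_ne_zero'.2 (Gfun_pos hy)
  have := (hy a).ne'; have := (hy b).ne'
  simp only [gBMinv, gBM]
  field_simp
  ring

/-- The `m`-th term of the sum defining `C^i_{jk}`, in units of `y_i / (4 y_j y_k)`. -/
noncomputable def cartanWeight (i j k m : Fin 4) : ℝ :=
  (1 - 2 * kd i m) *
    ((1 - 2 * kd j m) * (1 / 2 - kd j k - kd m k) + (1 - 2 * kd k m) * (1 / 2 - kd k j - kd m j)
      - (1 - 2 * kd j k) * (1 / 2 - kd j m - kd k m))

/- Writing `cartanWeight i j k m = (1 - 2 δ_im) B m`, in dimension `n` the bracket would sum over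
`m` to `(n/2 - 2) (1 - 2 δ_jk)`, which vanishes for `n = 4`; so the sum is `-2 B i`. -/
lemma sum_cartanWeight (i j k : Fin 4) : ∑ m, cartanWeight i j k m = 8 * Acoef i j k := by
  fin_cases i <;> fin_cases j <;> fin_cases k <;>
    simp [Fin.sum_univ_four, cartanWeight, Acoef, kd] <;> norm_num

/-- the vertical Cartan coefficients equal A^i_{jk}·yᵢ/(yⱼ·y_k). -/
theorem berwald_moor_vertical_cartan
    (y : Fin 4 → ℝ) (hy : ∀ i, 0 < y i) (i j k : Fin 4) :
    (1 / 2) * ∑ m, gBMinv y i m *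
        (pd (fun z => gBM z j m) k y + pd (fun z => gBM z k m) j y
          - pd (fun z => gBM z j k) m y)
      = Acoef i j k * y i / (y j * y k) := by
  have summand (m : Fin 4) : gBMinv y i m *
      (pd (fun z => gBM z j m) k y + pd (fun z => gBM z k m) j y - pd (fun z => gBM z j k) m y)
      = y i / (4 * y j * y k) * cartanWeight i j k m := by
    have := (hy j).ne'; have := (hy k).ne'; have := (hy m).ne'
    simp only [pd_gBM hy, mul_sub, mul_add, mul_div_assoc', ← mul_assoc, gBMinv_mul_gBM hy,
      cartanWeight]
    field_simp
  have := (hy j).ne'; have := (hy k).ne'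
  simp only [summand, ← Finset.mul_sum, sum_cartanWeight]
  field_simp
  ring
end

section
/- Let y : Fin 4 → ℝ have all components positive and define C^{i}_{jk}(y) := A^{i}_{jk}·yᵢ/(yⱼ·y_k), where A^{i}_{jk} = (2δ^{i}_{j} + 2δ^{i}_{k} + 2δ_{jk} − 8δ^{i}_{j}δ_{jk} − 1)/8. Then the contraction of C with y vanishes: ∑_{m=1}^{4} C^{i}_{jm}(y)·yₘ = 0 for all i, j ∈ {1,2,3,4}. -/
open scoped BigOperators

theorem sum_kd_right (i : Fin 4) : ∑ m, kd i m = 1 := by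
  simp [kd]

-- Summing over `k` gives `2δ^i_j + 2 + 2 - 8δ^i_j - 4 = 0`; the `4` is the dimension.
theorem sum_Acoef (i j : Fin 4) : ∑ k, Acoef i j k = 0 := by
  simp only [Acoef, ← Finset.sum_div, Finset.sum_sub_distrib, Finset.sum_add_distrib,
    ← Finset.mul_sum, sum_kd_right, Finset.sum_const, Finset.card_univ, Fintype.card_fin]
  ring

theorem CBM_mul_self (y : Fin 4 → ℝ) (i j k : Fin 4) (hk : y k ≠ 0) :
    CBM y i j k * y k = Acoef i j k * (y i / y j) := by
  rw [CBM, div_mul_eq_mul_div, mul_div_mul_right _ _ hk, mul_div_assoc]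

/-- the contraction of C with y vanishes. -/
theorem berwald_moor_C_contraction
    (y : Fin 4 → ℝ) (hy : ∀ i, 0 < y i) (i j : Fin 4) :
    ∑ m, CBM y i j m * y m = 0 := by
  calc ∑ m, CBM y i j m * y m = ∑ m, Acoef i j m * (y i / y j) :=
        Finset.sum_congr rfl fun m _ => CBM_mul_self y i j m (hy m).ne'
    _ = 0 := by rw [← Finset.sum_mul, sum_Acoef, zero_mul]
end

section
/- Let h₁₁ > 0 be a real number with h¹¹ = 1/h₁₁, let y : Fin 4 → ℝ have all components positive, set G(y) = y₁y₂y₃y₄, gᵢⱼ(y) = (1 − 2δᵢⱼ)·√(G(y))/(8·yᵢ·yⱼ), g^{jk}(y) = 2·(1 − 2δ_{jk})·yⱼ·y_k/√(G(y)), ε² = h¹¹·∑_{i,j} gᵢⱼ(y)·yᵢ·yⱼ (which equals h¹¹·√(G(y)) > 0), and define the unit velocity uᵏ = yᵏ/ε with ε = √(ε²). Then for all k, m ∈ {1,2,3,4}: h₁₁·g^{km}(y) − uᵏ·uᵐ = (1 − 4δ^{km})·uᵏ·uᵐ, or equivalently h₁₁·g^{km}(y) = 2·(1 − 2δ^{km})·uᵏ·uᵐ.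 -/
open scoped BigOperators

/-- Square of the relativistic factor ε. -/
noncomputable def epsSq (h11 : ℝ) (y : Fin 4 → ℝ) : ℝ :=
  h11⁻¹ * ∑ i, ∑ j, gBM y i j * y i * y j

/-- Unit relativistic velocity uᵏ = yᵏ/ε. -/
noncomputable def uVel (h11 : ℝ) (y : Fin 4 → ℝ) (k : Fin 4) : ℝ :=
  y k / Real.sqrt (epsSq h11 y)

lemma sum_sum_one_sub_two_kd : ∑ i, ∑ j, (1 - 2 * kd i j) = 8 := by
  norm_num [kd, Fin.sum_univ_four]

lemma gBM_mul_mul {y : Fin 4 → ℝ} {i j : Fin 4} (hi : y i ≠ 0) (hj : y j ≠ 0) :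
    gBM y i j * y i * y j = (1 - 2 * kd i j) * Real.sqrt (Gfun y) / 8 := by
  unfold gBM
  field_simp

lemma epsSq_eq {y : Fin 4 → ℝ} (hy : ∀ i, y i ≠ 0) (h11 : ℝ) :
    epsSq h11 y = h11⁻¹ * Real.sqrt (Gfun y) := by
  calc epsSq h11 y
      = h11⁻¹ * ∑ i, ∑ j, (1 - 2 * kd i j) * Real.sqrt (Gfun y) / 8 := by
        simp only [epsSq, gBM_mul_mul (hy _) (hy _)]
    _ = h11⁻¹ * ((∑ i, ∑ j, (1 - 2 * kd i j)) * Real.sqrt (Gfun y) / 8) := by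
        simp only [Finset.sum_div, Finset.sum_mul]
    _ = h11⁻¹ * Real.sqrt (Gfun y) := by rw [sum_sum_one_sub_two_kd]; ring

lemma uVel_mul_uVel {h11 : ℝ} {y : Fin 4 → ℝ} (h : 0 ≤ epsSq h11 y) (k m : Fin 4) :
    uVel h11 y k * uVel h11 y m = y k * y m / epsSq h11 y := by
  rw [uVel, uVel, div_mul_div_comm, Real.mul_self_sqrt h]

/-- the identity converting the Berwald-Moór stream-line
equations into the coefficient form (1 − 4δ^{km}). -/
theorem berwald_moor_streamline_coeff
    (h11 : ℝ) (hh : 0 < h11) (y : Fin 4 → ℝ) (hy : ∀ i, 0 < y i) :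
    (epsSq h11 y = h11⁻¹ * Real.sqrt (Gfun y) ∧ 0 < epsSq h11 y) ∧
    ∀ k m : Fin 4,
      h11 * gBMinv y k m - uVel h11 y k * uVel h11 y m
          = (1 - 4 * kd k m) * uVel h11 y k * uVel h11 y m ∧
      h11 * gBMinv y k m = 2 * (1 - 2 * kd k m) * uVel h11 y k * uVel h11 y m := by
  have heps : epsSq h11 y = h11⁻¹ * Real.sqrt (Gfun y) := epsSq_eq (fun i => (hy i).ne') h11
  have hpos : 0 < epsSq h11 y := by
    rw [heps]
    have := Real.sqrt_pos.mpr (Gfun_pos hy)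
    positivity
  refine ⟨⟨heps, hpos⟩, fun k m => ?_⟩
  have hcoeff : h11 * gBMinv y k m = 2 * (1 - 2 * kd k m) * uVel h11 y k * uVel h11 y m := by
    rw [mul_assoc _ (uVel h11 y k), uVel_mul_uVel hpos.le, heps, gBMinv]
    field_simp
  exact ⟨by rw [hcoeff]; ring, hcoeff⟩
end

section
/- Let y : Fin 4 → ℝ have all components positive, set G(y) = y₁y₂y₃y₄, g^{jk}(y) = 2·(1 − 2δ_{jk})·yⱼ·y_k/√(G(y)), and C^{j}_{mp}(y) = A^{j}_{mp}·yⱼ/(yₘ·y_p) with A^{j}_{mp} = (2δ^{j}_{m} + 2δ^{j}_{p} + 2δ_{mp} − 8δ^{j}_{m}δ_{mp} − 1)/8. Then the vertical covariant derivative of the inverse metric with respect to the Cartan canonical connection vanishes: for all j, k, p ∈ {1,2,3,4}, ∂g^{jk}/∂y_p(y) = −∑_{m=1}^{4} g^{mk}(y)·C^{j}_{mp}(y) − ∑_{m=1}^{4} g^{jm}(y)·C^{k}_{mp}(y). -/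
open scoped BigOperators

theorem fderiv_prod_apply_single_mul {𝕜 ι : Type*} [NontriviallyNormedField 𝕜] [Fintype ι]
    [DecidableEq ι] (y : ι → 𝕜) (p : ι) :
    fderiv 𝕜 (fun z : ι → 𝕜 => ∏ i, z i) y (Pi.single p 1) * y p = ∏ i, y i := by
  rw [hasFDerivAt_finsetProd.fderiv]
  simp [Pi.single_apply, Finset.prod_erase_mul]

lemma kd_comm (i j : Fin 4) : kd i j = kd j i := by
  simp only [kd, eq_comm]

lemma kd_mul_apply_eq (y : Fin 4 → ℝ) (i j : Fin 4) : kd i j * y i = kd i j * y j := by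
  by_cases h : i = j <;> simp [kd, h]

lemma single_one_apply_eq_kd (i j : Fin 4) : (Pi.single j 1 : Fin 4 → ℝ) i = kd i j :=
  Pi.single_apply j 1 i

lemma sum_kd_mul (k : Fin 4) (f : Fin 4 → ℝ) : ∑ m, kd m k * f m = f k := by
  simp [kd]

lemma sum_Acoef_mid (j p : Fin 4) : ∑ m, Acoef j m p = 0 := by
  fin_cases j <;> fin_cases p <;> simp [Acoef, kd, Fin.sum_univ_four] <;> norm_num [Fin.ext_iff]

lemma sum_one_sub_two_kd_mul_Acoef (j k p : Fin 4) :
    ∑ m, (1 - 2 * kd m k) * Acoef j m p = -2 * Acoef j k p := by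
  simp only [sub_mul, one_mul, Finset.sum_sub_distrib, mul_assoc, ← Finset.mul_sum, sum_kd_mul,
    sum_Acoef_mid]
  ring

lemma Acoef_add_Acoef_swap (j k p : Fin 4) :
    4 * (Acoef j k p + Acoef k j p) = (1 - 2 * kd j k) * (2 * kd j p + 2 * kd k p - 1) := by
  simp only [Acoef, kd_comm k j]
  ring

lemma Gfun_eq_prod (y : Fin 4 → ℝ) : Gfun y = ∏ i, y i :=
  (Fin.prod_univ_four y).symm

lemma pd_Gfun_mul (y : Fin 4 → ℝ) (p : Fin 4) : pd Gfun p y * y p = Gfun y := by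
  simp only [pd, funext Gfun_eq_prod, fderiv_prod_apply_single_mul]

lemma gBMinv_comm (y : Fin 4 → ℝ) (j k : Fin 4) : gBMinv y j k = gBMinv y k j := by
  simp only [gBMinv, kd_comm j k]
  ring

lemma pd_gBMinv {y : Fin 4 → ℝ} (hy : ∀ i, 0 < y i) (j k p : Fin 4) :
    pd (fun z => gBMinv z j k) p y = gBMinv y j k * (kd j p + kd k p - 1 / 2) / y p := by
  have hG := Gfun_pos hy
  have hs : 0 < √(Gfun y) := Real.sqrt_pos.mpr hG
  have hyp := (hy p).ne'
  have hcoord (i : Fin 4) : HasFDerivAt (fun z : Fin 4 → ℝ => z i)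
      (ContinuousLinearMap.proj (R := ℝ) (φ := fun _ : Fin 4 => ℝ) i) y :=
    hasFDerivAt_apply i y
  have hGderiv : HasFDerivAt Gfun (fderiv ℝ Gfun y) y := by
    rw [funext Gfun_eq_prod]
    exact hasFDerivAt_finsetProd.differentiableAt.hasFDerivAt
  have hnum := ((hcoord j).mul (hcoord k)).const_mul (2 * (1 - 2 * kd j k))
  have hinv := (hasDerivAt_inv hs.ne').comp_hasFDerivAt y (hGderiv.sqrt hG.ne')
  have hf : HasFDerivAt (fun z => gBMinv z j k) _ y :=
    (hnum.mul hinv).congr_of_eventuallyEq (Filter.Eventually.of_forall fun z => by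
      simp only [gBMinv, Pi.mul_apply, Function.comp_apply, div_eq_mul_inv, mul_assoc])
  have hGp : fderiv ℝ Gfun y (Pi.single p 1) = √(Gfun y) ^ 2 / y p := by
    rw [Real.sq_sqrt hG.le, eq_div_iff hyp, ← pd_Gfun_mul y p, pd]
  rw [pd, hf.fderiv]
  simp only [add_apply, smul_apply, ContinuousLinearMap.proj_apply, single_one_apply_eq_kd,
    smul_eq_mul, Function.comp_apply, Pi.mul_apply, hGp, gBMinv]
  field_simp
  linear_combination
    (-2 * (1 - 2 * kd j k)) * (y k * kd_mul_apply_eq y j p + y j * kd_mul_apply_eq y k p)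

lemma gBMinv_mul_CBM {y : Fin 4 → ℝ} (hy : ∀ i, 0 < y i) (j k m p : Fin 4) :
    gBMinv y m k * CBM y j m p
      = (1 - 2 * kd m k) * Acoef j m p * (2 * y j * y k / (√(Gfun y) * y p)) := by
  have hym := (hy m).ne'
  have hyp := (hy p).ne'
  simp only [gBMinv, CBM]
  field_simp

lemma sum_gBMinv_mul_CBM {y : Fin 4 → ℝ} (hy : ∀ i, 0 < y i) (j k p : Fin 4) :
    ∑ m, gBMinv y m k * CBM y j m p = -4 * Acoef j k p * y j * y k / (√(Gfun y) * y p) := by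
  simp only [gBMinv_mul_CBM hy, ← Finset.sum_mul, sum_one_sub_two_kd_mul_Acoef]
  ring

/-- vertical metricity of the Cartan connection for the
inverse metric: g^{jk}|_{(p)} = 0. -/
theorem berwald_moor_inverse_vertical_metricity
    (y : Fin 4 → ℝ) (hy : ∀ i, 0 < y i) (j k p : Fin 4) :
    pd (fun z => gBMinv z j k) p y
      = -(∑ m, gBMinv y m k * CBM y j m p) - ∑ m, gBMinv y j m * CBM y k m p := by
  have hswap : ∑ m, gBMinv y j m * CBM y k m p = ∑ m, gBMinv y m j * CBM y k m p := by
    simp only [gBMinv_comm y j]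
  have hs := (Real.sqrt_pos.mpr (Gfun_pos hy)).ne'
  have hyp := (hy p).ne'
  rw [pd_gBMinv hy, hswap, sum_gBMinv_mul_CBM hy, sum_gBMinv_mul_CBM hy, gBMinv]
  field_simp
  linear_combination (-(y j * y k)) * Acoef_add_Acoef_swap j k p
end
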